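/- arXiv:2009.00714 — 2 statements merged into one kernel-verified Lean document; each statement's English description precedes it below -/
import Mathlib

section
/- Two rectangles with side lengths (a₁, c₁) and (a₂, c₂), aᵢ ≤ cᵢ, that have the same first two Dirichlet Laplace eigenvalues are congruent: a₁ = a₂ and c₁ = c₂. Here the Dirichlet eigenvalues of an a × c rectangle are π²(m²/a² + n²/c²) for positive integers m, n, so λ₁ = π²(1/a² + 1/c²) and λ₂ = π²(1/a² + 4/c²) (counting with multiplicity, λ₂ being the second smallest). -/
open Real

theorem stmt_10 (a₁ c₁ a₂ c₂ : ℝ) (ha₁ : 0 < a₁) (ha₂ : 0 < a₂)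
    (hac₁ : a₁ ≤ c₁) (hac₂ : a₂ ≤ c₂)
    (heig1 : π ^ 2 * (1 / a₁ ^ 2 + 1 / c₁ ^ 2) = π ^ 2 * (1 / a₂ ^ 2 + 1 / c₂ ^ 2))
    (heig2 : π ^ 2 * (1 / a₁ ^ 2 + 4 / c₁ ^ 2) = π ^ 2 * (1 / a₂ ^ 2 + 4 / c₂ ^ 2)) :
    a₁ = a₂ ∧ c₁ = c₂ := by
  have hc₁ : 0 < c₁ := lt_of_lt_of_le ha₁ hac₁
  have hc₂ : 0 < c₂ := lt_of_lt_of_le ha₂ hac₂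
  have hπ : (π : ℝ) ^ 2 ≠ 0 := pow_ne_zero _ pi_ne_zero
  have h1 : 1 / a₁ ^ 2 + 1 / c₁ ^ 2 = 1 / a₂ ^ 2 + 1 / c₂ ^ 2 :=
    mul_left_cancel₀ hπ heig1
  have h2 : 1 / a₁ ^ 2 + 4 / c₁ ^ 2 = 1 / a₂ ^ 2 + 4 / c₂ ^ 2 :=
    mul_left_cancel₀ hπ heig2
  have hc2 : (1 : ℝ) / c₁ ^ 2 = 1 / c₂ ^ 2 := by linear_combination (h2 - h1) / 3
  have hcsq : c₁ ^ 2 = c₂ ^ 2 := by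
    field_simp at hc2
    nlinarith
  have hcc : c₁ = c₂ := by nlinarith [sq_nonneg (c₁ - c₂)]
  have ha2 : (1 : ℝ) / a₁ ^ 2 = 1 / a₂ ^ 2 := by
    rw [hcc] at h1; linear_combination h1
  have hasq : a₁ ^ 2 = a₂ ^ 2 := by
    field_simp at ha2
    nlinarith
  have haa : a₁ = a₂ := by nlinarith [sq_nonneg (a₁ - a₂)]
  exact ⟨haa, hcc⟩
end

section
/- If two trapezoids with base angles 0 < βᵢ ≤ αᵢ ≤ π/2 have equal angle invariants F(α₁) + F(β₁) = F(α₂) + F(β₂) where F(x) = 1/(x(π-x)), and the first is a rectangle (α₁ = β₁ = π/2), then the second is also a rectangle (α₂ = β₂ = π/2). -/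
open Real

/-- AM-GM: `x (c - x) ≤ (c / 2) ^ 2`. -/
lemma four_div_sq_le_one_div_mul_sub {c x : ℝ} (hx : 0 < x) (hxc : x < c) :
    4 / c ^ 2 ≤ 1 / (x * (c - x)) := by
  have hpos : 0 < x * (c - x) := mul_pos hx (sub_pos.mpr hxc)
  rw [div_le_div_iff₀ (pow_pos (hx.trans hxc) 2) hpos]
  nlinarith [sq_nonneg (x - c / 2)]

lemma one_div_mul_sub_eq_four_div_sq_iff {c x : ℝ} (hc : c ≠ 0) :
    1 / (x * (c - x)) = 4 / c ^ 2 ↔ x = c / 2 := by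
  constructor
  · intro h
    have hprod : x * (c - x) = c ^ 2 / 4 := by
      rwa [one_div, ← inv_div, inv_inj] at h
    have hsq : (x - c / 2) ^ 2 = 0 := by linear_combination -hprod
    linarith [pow_eq_zero_iff (n := 2) two_ne_zero |>.mp hsq]
  · rintro rfl
    field_simp
    ring

theorem stmt_17_general (α₁ β₁ α₂ β₂ : ℝ)
    (hβ₂ : 0 < β₂) (hβα₂ : β₂ ≤ α₂) (hα₂ : α₂ ≤ π / 2)
    (hq : 1 / (α₁ * (π - α₁)) + 1 / (β₁ * (π - β₁))
        = 1 / (α₂ * (π - α₂)) + 1 / (β₂ * (π - β₂)))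
    (hrect : α₁ = π / 2 ∧ β₁ = π / 2) : α₂ = π / 2 ∧ β₂ = π / 2 := by
  obtain ⟨rfl, rfl⟩ := hrect
  have hα₂lt : α₂ < π := by linarith [pi_pos]
  have hF_half : 1 / (π / 2 * (π - π / 2)) = 4 / π ^ 2 :=
    (one_div_mul_sub_eq_four_div_sq_iff pi_ne_zero).mpr rfl
  have hFα₂ := four_div_sq_le_one_div_mul_sub (hβ₂.trans_le hβα₂) hα₂lt
  have hFβ₂ := four_div_sq_le_one_div_mul_sub hβ₂ (hβα₂.trans_lt hα₂lt)
  rw [hF_half] at hq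
  exact ⟨(one_div_mul_sub_eq_four_div_sq_iff pi_ne_zero).mp (by linarith),
    (one_div_mul_sub_eq_four_div_sq_iff pi_ne_zero).mp (by linarith)⟩

theorem stmt_17 (α₁ β₁ α₂ β₂ : ℝ) (hβ₁ : 0 < β₁) (hβα₁ : β₁ ≤ α₁) (hα₁ : α₁ ≤ π / 2)
    (hβ₂ : 0 < β₂) (hβα₂ : β₂ ≤ α₂) (hα₂ : α₂ ≤ π / 2)
    (hq : 1 / (α₁ * (π - α₁)) + 1 / (β₁ * (π - β₁))
        = 1 / (α₂ * (π - α₂)) + 1 / (β₂ * (π - β₂)))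
    (hrect : α₁ = π / 2 ∧ β₁ = π / 2) : α₂ = π / 2 ∧ β₂ = π / 2 :=
  stmt_17_general α₁ β₁ α₂ β₂ hβ₂ hβα₂ hα₂ hq hrect
end
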